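/- arXiv:math-ph/0602019 — 2 statements merged into one kernel-verified Lean document; each statement's English description precedes it below -/
import Mathlib

section
/- Let u be a solution of the elliptic Euler–Darboux equation on an open set U ⊆ ℝ² with x + y ≠ 0 on U. Then the function v(x,y) = (u_x + u_y + 2x·u_xy + 2y·u_xy)/(x+y) is also a solution of the elliptic Euler–Darboux equation on U. -/
/-- Partial derivative of a real-valued function on `ℝ²` in the direction `v`. -/
noncomputable def pdv (v : ℝ × ℝ) (f : ℝ × ℝ → ℝ) : ℝ × ℝ → ℝ := fun p => fderiv ℝ f p v

/-- Partial derivative with respect to the first coordinate (`x`). -/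
noncomputable def px : (ℝ × ℝ → ℝ) → ℝ × ℝ → ℝ := pdv (1, 0)

/-- Partial derivative with respect to the second coordinate (`y`). -/
noncomputable def py : (ℝ × ℝ → ℝ) → ℝ × ℝ → ℝ := pdv (0, 1)

/-- `u` is a solution of the elliptic Euler–Darboux equation
`(x+y)(u_xx + u_yy) + u_x + u_y = 0` on `U`. -/
def IsEDSolution (U : Set (ℝ × ℝ)) (u : ℝ × ℝ → ℝ) : Prop :=
  ContDiffOn ℝ (⊤ : ℕ∞) u U ∧
    ∀ p ∈ U, (p.1 + p.2) * (px (px u) p + py (py u) p) + px u p + py u p = 0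

section helpers
variable {U : Set (ℝ × ℝ)} {f g : ℝ × ℝ → ℝ} {p v w : ℝ × ℝ}

theorem pdv_smoothOn (hU : IsOpen U) (hf : ContDiffOn ℝ (⊤ : ℕ∞) f U) :
    ContDiffOn ℝ (⊤ : ℕ∞) (pdv v f) U :=
  (hf.fderiv_of_isOpen hU (by simp)).clm_apply contDiffOn_const

theorem diffAt (hU : IsOpen U) (hf : ContDiffOn ℝ (⊤ : ℕ∞) f U) (hp : p ∈ U) :
    DifferentiableAt ℝ f p :=
  (hf.contDiffAt (hU.mem_nhds hp)).differentiableAt (by simp)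

theorem pdv_congr (hU : IsOpen U) (h : Set.EqOn f g U) (hp : p ∈ U) :
    pdv v f p = pdv v g p := by
  unfold pdv
  rw [Filter.EventuallyEq.fderiv_eq (by filter_upwards [hU.mem_nhds hp] using h)]

theorem pdv_add (hf : DifferentiableAt ℝ f p) (hg : DifferentiableAt ℝ g p) :
    pdv v (fun q => f q + g q) p = pdv v f p + pdv v g p := by
  simp [pdv, fderiv_fun_add hf hg]

theorem pdv_sub (hf : DifferentiableAt ℝ f p) (hg : DifferentiableAt ℝ g p) :
    pdv v (fun q => f q - g q) p = pdv v f p - pdv v g p := by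
  simp [pdv, fderiv_fun_sub hf hg]

theorem pdv_const_mul (c : ℝ) (hf : DifferentiableAt ℝ f p) :
    pdv v (fun q => c * f q) p = c * pdv v f p := by
  simp [pdv, fderiv_const_mul hf c]

theorem pdv_s_mul (hf : DifferentiableAt ℝ f p) :
    pdv v (fun q => (q.1 + q.2) * f q) p
      = (v.1 + v.2) * f p + (p.1 + p.2) * pdv v f p := by
  have hs : DifferentiableAt ℝ (fun q : ℝ × ℝ => q.1 + q.2) p :=
    differentiableAt_fst.add differentiableAt_snd
  have hds : fderiv ℝ (fun q : ℝ × ℝ => q.1 + q.2) p v = v.1 + v.2 := by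
    have : HasFDerivAt (fun q : ℝ × ℝ => q.1 + q.2)
        (ContinuousLinearMap.fst ℝ ℝ ℝ + ContinuousLinearMap.snd ℝ ℝ ℝ) p :=
      (hasFDerivAt_fst).add (hasFDerivAt_snd)
    rw [this.fderiv]; rfl
  simp only [pdv, fderiv_fun_mul hs hf]
  simp [hds]; ring

theorem pdv_zero_of (hU : IsOpen U) (h : ∀ q ∈ U, f q = 0) (hp : p ∈ U) :
    pdv v f p = 0 := by
  rw [pdv_congr hU (g := fun _ => (0 : ℝ)) (fun q hq => h q hq) hp]
  simp [pdv]

theorem pdv_pdv_eq (hf : DifferentiableAt ℝ (fderiv ℝ f) p) :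
    pdv w (pdv v f) p = fderiv ℝ (fderiv ℝ f) p w v := by
  rw [show pdv w (pdv v f) p = fderiv ℝ (fun q => (fderiv ℝ f q) v) p w from rfl]
  rw [fderiv_clm_apply hf (differentiableAt_const v)]
  simp

theorem pdv_swap (hU : IsOpen U) (hf : ContDiffOn ℝ (⊤ : ℕ∞) f U) (hp : p ∈ U) :
    px (py f) p = py (px f) p := by
  have hfa : ContDiffAt ℝ (⊤ : ℕ∞) f p := hf.contDiffAt (hU.mem_nhds hp)
  have hd : DifferentiableAt ℝ (fderiv ℝ f) p :=
    (hfa.fderiv_right (m := (⊤ : ℕ∞)) (by simp)).differentiableAt (by simp)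
  have hsymm := hfa.isSymmSndFDerivAt (by rw [minSmoothness_of_isRCLikeNormedField]; exact WithTop.coe_le_coe.mpr (le_top : (2 : ℕ∞) ≤ ⊤))
  show pdv (1,0) (pdv (0,1) f) p = pdv (0,1) (pdv (1,0) f) p
  rw [pdv_pdv_eq hd, pdv_pdv_eq hd]
  exact hsymm _ _

-- px / py specializations
theorem px_congr (hU : IsOpen U) (h : Set.EqOn f g U) (hp : p ∈ U) :
    px f p = px g p := pdv_congr hU h hp

theorem py_congr (hU : IsOpen U) (h : Set.EqOn f g U) (hp : p ∈ U) :
    py f p = py g p := pdv_congr hU h hp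

theorem px_add (hf : DifferentiableAt ℝ f p) (hg : DifferentiableAt ℝ g p) :
    px (fun q => f q + g q) p = px f p + px g p := pdv_add hf hg

theorem py_add (hf : DifferentiableAt ℝ f p) (hg : DifferentiableAt ℝ g p) :
    py (fun q => f q + g q) p = py f p + py g p := pdv_add hf hg

theorem px_sub (hf : DifferentiableAt ℝ f p) (hg : DifferentiableAt ℝ g p) :
    px (fun q => f q - g q) p = px f p - px g p := pdv_sub hf hg

theorem py_sub (hf : DifferentiableAt ℝ f p) (hg : DifferentiableAt ℝ g p) :
    py (fun q => f q - g q) p = py f p - py g p := pdv_sub hf hg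

theorem px_cmul (c : ℝ) (hf : DifferentiableAt ℝ f p) :
    px (fun q => c * f q) p = c * px f p := pdv_const_mul c hf

theorem py_cmul (c : ℝ) (hf : DifferentiableAt ℝ f p) :
    py (fun q => c * f q) p = c * py f p := pdv_const_mul c hf

theorem px_s_mul (hf : DifferentiableAt ℝ f p) :
    px (fun q => (q.1 + q.2) * f q) p = f p + (p.1 + p.2) * px f p := by
  have := pdv_s_mul (v := ((1:ℝ), (0:ℝ))) hf
  simpa [px] using this

theorem py_s_mul (hf : DifferentiableAt ℝ f p) :
    py (fun q => (q.1 + q.2) * f q) p = f p + (p.1 + p.2) * py f p := by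
  have := pdv_s_mul (v := ((0:ℝ), (1:ℝ))) hf
  simpa [py] using this

theorem px_zero_of (hU : IsOpen U) (h : ∀ q ∈ U, f q = 0) (hp : p ∈ U) :
    px f p = 0 := pdv_zero_of hU h hp

theorem py_zero_of (hU : IsOpen U) (h : ∀ q ∈ U, f q = 0) (hp : p ∈ U) :
    py f p = 0 := pdv_zero_of hU h hp

end helpers

/-- The symmetry `X₁`: if `u` solves the elliptic Euler–Darboux equation, so does
`v = (u_x + u_y + 2x·u_xy + 2y·u_xy)/(x+y)`. -/
theorem ED_symmetry_X1 (U : Set (ℝ × ℝ)) (hU : IsOpen U)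
    (hne : ∀ p ∈ U, p.1 + p.2 ≠ 0) (u : ℝ × ℝ → ℝ) (hu : IsEDSolution U u) :
    IsEDSolution U (fun p =>
      (px u p + py u p + 2 * p.1 * py (px u) p + 2 * p.2 * py (px u) p) / (p.1 + p.2)) := by
  obtain ⟨hsm, heq⟩ := hu
  have d : ∀ {f : ℝ × ℝ → ℝ}, ContDiffOn ℝ (⊤ : ℕ∞) f U → ∀ {q : ℝ × ℝ}, q ∈ U →
      DifferentiableAt ℝ f q := fun hf _ hq => diffAt hU hf hq
  -- smoothness of iterated partials
  have s10 : ContDiffOn ℝ (⊤ : ℕ∞) (px u) U := pdv_smoothOn hU hsm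
  have s01 : ContDiffOn ℝ (⊤ : ℕ∞) (py u) U := pdv_smoothOn hU hsm
  have s20 : ContDiffOn ℝ (⊤ : ℕ∞) (px (px u)) U := pdv_smoothOn hU s10
  have s11 : ContDiffOn ℝ (⊤ : ℕ∞) (px (py u)) U := pdv_smoothOn hU s01
  have s02 : ContDiffOn ℝ (⊤ : ℕ∞) (py (py u)) U := pdv_smoothOn hU s01
  have syx : ContDiffOn ℝ (⊤ : ℕ∞) (py (px u)) U := pdv_smoothOn hU s10
  have s30 : ContDiffOn ℝ (⊤ : ℕ∞) (px (px (px u))) U := pdv_smoothOn hU s20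
  have s21 : ContDiffOn ℝ (⊤ : ℕ∞) (px (px (py u))) U := pdv_smoothOn hU s11
  have s12 : ContDiffOn ℝ (⊤ : ℕ∞) (px (py (py u))) U := pdv_smoothOn hU s02
  have s03 : ContDiffOn ℝ (⊤ : ℕ∞) (py (py (py u))) U := pdv_smoothOn hU s02
  -- mixed-partial swap identities on U
  have w1 : Set.EqOn (py (px u)) (px (py u)) U := fun q hq => (pdv_swap hU hsm hq).symm
  have w2 : Set.EqOn (py (px (px u))) (px (px (py u))) U := fun q hq => by
    calc py (px (px u)) q = px (py (px u)) q := (pdv_swap hU s10 hq).symm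
      _ = px (px (py u)) q := px_congr hU w1 hq
  have w3 : Set.EqOn (py (px (py u))) (px (py (py u))) U := fun q hq =>
    (pdv_swap hU s01 hq).symm
  have w4 : Set.EqOn (py (px (px (px u)))) (px (px (px (py u)))) U := fun q hq => by
    calc py (px (px (px u))) q = px (py (px (px u))) q := (pdv_swap hU s20 hq).symm
      _ = px (px (px (py u))) q := px_congr hU w2 hq
  have w5 : Set.EqOn (py (px (px (py u)))) (px (px (py (py u)))) U := fun q hq => by
    calc py (px (px (py u))) q = px (py (px (py u))) q := (pdv_swap hU s11 hq).symm
      _ = px (px (py (py u))) q := px_congr hU w3 hq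
  have w6 : Set.EqOn (py (px (py (py u)))) (px (py (py (py u)))) U := fun q hq =>
    (pdv_swap hU s02 hq).symm
  constructor
  · -- smoothness of v
    apply ContDiffOn.div
    · exact ((s10.add s01).add
        ((contDiffOn_const.mul contDiff_fst.contDiffOn).mul syx)).add
        ((contDiffOn_const.mul contDiff_snd.contDiffOn).mul syx)
    · exact (contDiff_fst.add contDiff_snd).contDiffOn
    · exact hne
  · intro p hp
    -- v agrees with g := 2 u_xy - u_xx - u_yy on U
    have hvg : Set.EqOn (fun q : ℝ × ℝ =>
        (px u q + py u q + 2 * q.1 * py (px u) q + 2 * q.2 * py (px u) q) / (q.1 + q.2))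
        (fun q => 2 * px (py u) q - px (px u) q - py (py u) q) U := by
      intro q hq
      have h0 := heq q hq
      have hw := w1 hq
      simp only
      rw [hw, div_eq_iff (hne q hq)]
      linear_combination h0
    -- first derivative of the PDE in x
    have K1 : ∀ q ∈ U,
        (px (px u) q + py (py u) q)
          + (q.1 + q.2) * (px (px (px u)) q + px (py (py u)) q)
          + (px (px u) q + px (py u) q) = 0 := by
      intro q hq
      have dF : DifferentiableAt ℝ (fun r => px (px u) r + py (py u) r) q :=
        (d s20 hq).add (d s02 hq)
      have dsF : DifferentiableAt ℝ
          (fun r : ℝ × ℝ => (r.1 + r.2) * (px (px u) r + py (py u) r)) q :=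
        (differentiableAt_fst.add differentiableAt_snd).mul dF
      have h0 : px (fun r : ℝ × ℝ =>
          (r.1 + r.2) * (px (px u) r + py (py u) r) + px u r + py u r) q = 0 :=
        px_zero_of hU (fun r hr => heq r hr) hq
      rw [px_add (dsF.fun_add (d s10 hq)) (d s01 hq), px_add dsF (d s10 hq),
        px_s_mul dF, px_add (d s20 hq) (d s02 hq)] at h0
      linear_combination h0
    -- first derivative of the PDE in y
    have K2 : ∀ q ∈ U,
        (px (px u) q + py (py u) q)
          + (q.1 + q.2) * (px (px (py u)) q + py (py (py u)) q)
          + (px (py u) q + py (py u) q) = 0 := by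
      intro q hq
      have dF : DifferentiableAt ℝ (fun r => px (px u) r + py (py u) r) q :=
        (d s20 hq).add (d s02 hq)
      have dsF : DifferentiableAt ℝ
          (fun r : ℝ × ℝ => (r.1 + r.2) * (px (px u) r + py (py u) r)) q :=
        (differentiableAt_fst.add differentiableAt_snd).mul dF
      have h0 : py (fun r : ℝ × ℝ =>
          (r.1 + r.2) * (px (px u) r + py (py u) r) + px u r + py u r) q = 0 :=
        py_zero_of hU (fun r hr => heq r hr) hq
      rw [py_add (dsF.fun_add (d s10 hq)) (d s01 hq), py_add dsF (d s10 hq),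
        py_s_mul dF, py_add (d s20 hq) (d s02 hq), w2 hq, w1 hq] at h0
      linear_combination h0
    -- the "D of PDE" function B vanishes on U
    have ZB : ∀ q ∈ U, (q.1 + q.2) *
          (px (px (px u)) q + px (py (py u)) q - px (px (py u)) q - py (py (py u)) q)
          + (px (px u) q - py (py u) q) = 0 := by
      intro q hq
      linear_combination K1 q hq - K2 q hq
    -- differentiate B in x and in y at p
    have dM : ∀ {q : ℝ × ℝ}, q ∈ U → DifferentiableAt ℝ (fun r =>
        px (px (px u)) r + px (py (py u)) r - px (px (py u)) r - py (py (py u)) r) q :=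
      fun hq => (((d s30 hq).add (d s12 hq)).sub (d s21 hq)).sub (d s03 hq)
    have dN : ∀ {q : ℝ × ℝ}, q ∈ U →
        DifferentiableAt ℝ (fun r => px (px u) r - py (py u) r) q :=
      fun hq => (d s20 hq).sub (d s02 hq)
    have dsM : ∀ {q : ℝ × ℝ}, q ∈ U → DifferentiableAt ℝ (fun r : ℝ × ℝ => (r.1 + r.2) *
        (px (px (px u)) r + px (py (py u)) r - px (px (py u)) r - py (py (py u)) r)) q :=
      fun hq => (differentiableAt_fst.add differentiableAt_snd).mul (dM hq)
    have E1 : (px (px (px u)) p + px (py (py u)) p - px (px (py u)) p - py (py (py u)) p)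
        + (p.1 + p.2) * (px (px (px (px u))) p + px (px (py (py u))) p
            - px (px (px (py u))) p - px (py (py (py u))) p)
        + (px (px (px u)) p - px (py (py u)) p) = 0 := by
      have h0 : px (fun q : ℝ × ℝ => (q.1 + q.2) *
          (px (px (px u)) q + px (py (py u)) q - px (px (py u)) q - py (py (py u)) q)
          + (px (px u) q - py (py u) q)) p = 0 :=
        px_zero_of hU ZB hp
      rw [px_add (dsM hp) (dN hp), px_s_mul (dM hp),
        px_sub (((d s30 hp).fun_add (d s12 hp)).fun_sub (d s21 hp)) (d s03 hp),
        px_sub ((d s30 hp).fun_add (d s12 hp)) (d s21 hp),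
        px_add (d s30 hp) (d s12 hp),
        px_sub (d s20 hp) (d s02 hp)] at h0
      linear_combination h0
    have E2 : (px (px (px u)) p + px (py (py u)) p - px (px (py u)) p - py (py (py u)) p)
        + (p.1 + p.2) * (px (px (px (py u))) p + px (py (py (py u))) p
            - px (px (py (py u))) p - py (py (py (py u))) p)
        + (px (px (py u)) p - py (py (py u)) p) = 0 := by
      have h0 : py (fun q : ℝ × ℝ => (q.1 + q.2) *
          (px (px (px u)) q + px (py (py u)) q - px (px (py u)) q - py (py (py u)) q)
          + (px (px u) q - py (py u) q)) p = 0 :=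
        py_zero_of hU ZB hp
      rw [py_add (dsM hp) (dN hp), py_s_mul (dM hp),
        py_sub (((d s30 hp).fun_add (d s12 hp)).fun_sub (d s21 hp)) (d s03 hp),
        py_sub ((d s30 hp).fun_add (d s12 hp)) (d s21 hp),
        py_add (d s30 hp) (d s12 hp),
        py_sub (d s20 hp) (d s02 hp),
        w4 hp, w6 hp, w5 hp, w2 hp] at h0
      linear_combination h0
    -- first derivatives of v on U
    have hv1x : ∀ q ∈ U, px (fun r : ℝ × ℝ =>
        (px u r + py u r + 2 * r.1 * py (px u) r + 2 * r.2 * py (px u) r) / (r.1 + r.2)) q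
        = 2 * px (px (py u)) q - px (px (px u)) q - px (py (py u)) q := by
      intro q hq
      rw [px_congr hU hvg hq,
        px_sub (((d s11 hq).const_mul 2).fun_sub (d s20 hq)) (d s02 hq),
        px_sub ((d s11 hq).const_mul 2) (d s20 hq),
        px_cmul 2 (d s11 hq)]
    have hv1y : ∀ q ∈ U, py (fun r : ℝ × ℝ =>
        (px u r + py u r + 2 * r.1 * py (px u) r + 2 * r.2 * py (px u) r) / (r.1 + r.2)) q
        = 2 * px (py (py u)) q - px (px (py u)) q - py (py (py u)) q := by
      intro q hq
      rw [py_congr hU hvg hq,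
        py_sub (((d s11 hq).const_mul 2).fun_sub (d s20 hq)) (d s02 hq),
        py_sub ((d s11 hq).const_mul 2) (d s20 hq),
        py_cmul 2 (d s11 hq), w3 hq, w2 hq]
    -- second derivatives of v at p
    have hv2x : px (px (fun r : ℝ × ℝ =>
        (px u r + py u r + 2 * r.1 * py (px u) r + 2 * r.2 * py (px u) r) / (r.1 + r.2))) p
        = 2 * px (px (px (py u))) p - px (px (px (px u))) p - px (px (py (py u))) p := by
      rw [px_congr hU (fun q hq => hv1x q hq) hp,
        px_sub (((d s21 hp).const_mul 2).fun_sub (d s30 hp)) (d s12 hp),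
        px_sub ((d s21 hp).const_mul 2) (d s30 hp),
        px_cmul 2 (d s21 hp)]
    have hv2y : py (py (fun r : ℝ × ℝ =>
        (px u r + py u r + 2 * r.1 * py (px u) r + 2 * r.2 * py (px u) r) / (r.1 + r.2))) p
        = 2 * px (py (py (py u))) p - px (px (py (py u))) p - py (py (py (py u))) p := by
      rw [py_congr hU (fun q hq => hv1y q hq) hp,
        py_sub (((d s12 hp).const_mul 2).fun_sub (d s21 hp)) (d s03 hp),
        py_sub ((d s12 hp).const_mul 2) (d s21 hp),
        py_cmul 2 (d s12 hp), w6 hp, w5 hp]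
    rw [hv2x, hv2y, hv1x p hp, hv1y p hp]
    linear_combination E2 - E1
end

section
/- Let u be a solution of the elliptic Euler–Darboux equation on an open set U ⊆ ℝ² with x + y ≠ 0 on U. Then the function v(x,y) = (−y·u_x + 3x·u_y − 2y²·u_xy + 2x²·u_xy + 2x²·u_yy + 4xy·u_yy + 2y²·u_yy + x·u_x + y·u_y)/(x+y) is also a solution of the elliptic Euler–Darboux equation on U. -/
open Filter Topology

private lemma pdv_congr_on {U : Set (ℝ × ℝ)} (hU : IsOpen U) {f g : ℝ × ℝ → ℝ} {p : ℝ × ℝ}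
    (hp : p ∈ U) (h : ∀ q ∈ U, f q = g q) (v : ℝ × ℝ) : pdv v f p = pdv v g p := by
  have hfg : f =ᶠ[𝓝 p] g := by
    filter_upwards [hU.mem_nhds hp] with q hq using h q hq
  simp only [pdv, hfg.fderiv_eq]

private lemma pdv_zero_on {U : Set (ℝ × ℝ)} (hU : IsOpen U) {f : ℝ × ℝ → ℝ} {p : ℝ × ℝ}
    (hp : p ∈ U) (h : ∀ q ∈ U, f q = 0) (v : ℝ × ℝ) : pdv v f p = 0 := by
  rw [pdv_congr_on hU hp (g := fun _ => (0 : ℝ)) h v]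
  simp [pdv]

private lemma contDiffOn_pdv {U : Set (ℝ × ℝ)} (hU : IsOpen U) {f : ℝ × ℝ → ℝ}
    (hf : ContDiffOn ℝ (⊤ : ℕ∞) f U) (v : ℝ × ℝ) : ContDiffOn ℝ (⊤ : ℕ∞) (pdv v f) U := by
  have h1 : ContDiffOn ℝ (⊤ : ℕ∞) (fderiv ℝ f) U := hf.fderiv_of_isOpen hU (by simp)
  exact (ContinuousLinearMap.apply ℝ ℝ v).contDiff.comp_contDiffOn h1

private lemma pdv_comm {f : ℝ × ℝ → ℝ} {p : ℝ × ℝ} (hf : ContDiffAt ℝ (⊤ : ℕ∞) f p) (v w : ℝ × ℝ) :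
    pdv v (pdv w f) p = pdv w (pdv v f) p := by
  have hd : DifferentiableAt ℝ (fderiv ℝ f) p :=
    (hf.fderiv_right (m := 1) (WithTop.coe_le_coe.mpr le_top)).differentiableAt one_ne_zero
  have h1 : ∀ a b : ℝ × ℝ, pdv a (pdv b f) p = fderiv ℝ (fderiv ℝ f) p a b := by
    intro a b
    have hrfl : pdv a (pdv b f) p = fderiv ℝ (fun q => fderiv ℝ f q b) p a := rfl
    rw [hrfl, fderiv_clm_apply hd (differentiableAt_const b)]
    simp
  rw [h1, h1, (hf.isSymmSndFDerivAt (by rw [minSmoothness_of_isRCLikeNormedField]; exact WithTop.coe_le_coe.mpr le_top)) v w]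

private lemma affine_contDiff (a b c : ℝ) :
    ContDiff ℝ (⊤ : ℕ∞) (fun q : ℝ × ℝ => a * q.1 + b * q.2 + c) := by
  fun_prop

private lemma fderiv_affine (a b c : ℝ) (p v : ℝ × ℝ) :
    fderiv ℝ (fun q : ℝ × ℝ => a * q.1 + b * q.2 + c) p v = a * v.1 + b * v.2 := by
  have h : HasFDerivAt (fun q : ℝ × ℝ => a * q.1 + b * q.2 + c)
      (a • ContinuousLinearMap.fst ℝ ℝ ℝ + b • ContinuousLinearMap.snd ℝ ℝ ℝ) p := by
    have h1 : HasFDerivAt (fun q : ℝ × ℝ => q.1) (ContinuousLinearMap.fst ℝ ℝ ℝ) p :=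
      hasFDerivAt_fst
    have h2 : HasFDerivAt (fun q : ℝ × ℝ => q.2) (ContinuousLinearMap.snd ℝ ℝ ℝ) p :=
      hasFDerivAt_snd
    exact ((h1.const_mul a).add (h2.const_mul b)).add_const c
  rw [h.fderiv]
  simp [mul_comm]

private noncomputable def EDT (a b c : ℝ) (g : ℝ × ℝ → ℝ) : ℝ × ℝ → ℝ :=
  fun q => (a * q.1 + b * q.2 + c) * g q

private lemma EDT_contDiffOn {U : Set (ℝ × ℝ)} {g : ℝ × ℝ → ℝ} (hg : ContDiffOn ℝ (⊤ : ℕ∞) g U)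
    (a b c : ℝ) : ContDiffOn ℝ (⊤ : ℕ∞) (EDT a b c g) U :=
  ((affine_contDiff a b c).contDiffOn).mul hg

private lemma EDT_diffAt {g : ℝ × ℝ → ℝ} {p : ℝ × ℝ} (hg : DifferentiableAt ℝ g p)
    (a b c : ℝ) : DifferentiableAt ℝ (EDT a b c g) p :=
  (((affine_contDiff a b c).differentiable (by simp)) p).mul hg

private lemma pdv_EDT {g : ℝ × ℝ → ℝ} {p : ℝ × ℝ} (v : ℝ × ℝ) (hg : DifferentiableAt ℝ g p)
    (a b c : ℝ) :
    pdv v (EDT a b c g) p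
      = (a * v.1 + b * v.2) * g p + (a * p.1 + b * p.2 + c) * pdv v g p := by
  have haff : DifferentiableAt ℝ (fun q : ℝ × ℝ => a * q.1 + b * q.2 + c) p :=
    (affine_contDiff a b c).differentiable (by simp) p
  have hrfl : pdv v (EDT a b c g) p
      = fderiv ℝ (fun q : ℝ × ℝ => (a * q.1 + b * q.2 + c) * g q) p v := rfl
  rw [hrfl, fderiv_fun_mul haff hg]
  show _ = (a * v.1 + b * v.2) * g p + (a * p.1 + b * p.2 + c) * fderiv ℝ g p v
  simp only [ContinuousLinearMap.add_apply, ContinuousLinearMap.coe_smul', Pi.smul_apply,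
    smul_eq_mul, fderiv_affine]
  ring

private lemma pdv_add_fun {f g : ℝ × ℝ → ℝ} {p : ℝ × ℝ} (hf : DifferentiableAt ℝ f p)
    (hg : DifferentiableAt ℝ g p) (v : ℝ × ℝ) :
    pdv v (f + g) p = pdv v f p + pdv v g p := by
  simp only [pdv, fderiv_add hf hg]
  simp

private lemma pdv_T6 {g₁ g₂ g₃ g₄ g₅ g₆ : ℝ × ℝ → ℝ} {p : ℝ × ℝ} (v : ℝ × ℝ)
    {a₁ b₁ c₁ a₂ b₂ c₂ a₃ b₃ c₃ a₄ b₄ c₄ a₅ b₅ c₅ a₆ b₆ c₆ : ℝ}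
    (h₁ : DifferentiableAt ℝ g₁ p) (h₂ : DifferentiableAt ℝ g₂ p)
    (h₃ : DifferentiableAt ℝ g₃ p) (h₄ : DifferentiableAt ℝ g₄ p)
    (h₅ : DifferentiableAt ℝ g₅ p) (h₆ : DifferentiableAt ℝ g₆ p) :
    pdv v (EDT a₁ b₁ c₁ g₁ + EDT a₂ b₂ c₂ g₂ + EDT a₃ b₃ c₃ g₃ + EDT a₄ b₄ c₄ g₄
        + EDT a₅ b₅ c₅ g₅ + EDT a₆ b₆ c₆ g₆) p
      = ((a₁ * v.1 + b₁ * v.2) * g₁ p + (a₁ * p.1 + b₁ * p.2 + c₁) * pdv v g₁ p)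
        + ((a₂ * v.1 + b₂ * v.2) * g₂ p + (a₂ * p.1 + b₂ * p.2 + c₂) * pdv v g₂ p)
        + ((a₃ * v.1 + b₃ * v.2) * g₃ p + (a₃ * p.1 + b₃ * p.2 + c₃) * pdv v g₃ p)
        + ((a₄ * v.1 + b₄ * v.2) * g₄ p + (a₄ * p.1 + b₄ * p.2 + c₄) * pdv v g₄ p)
        + ((a₅ * v.1 + b₅ * v.2) * g₅ p + (a₅ * p.1 + b₅ * p.2 + c₅) * pdv v g₅ p)
        + ((a₆ * v.1 + b₆ * v.2) * g₆ p + (a₆ * p.1 + b₆ * p.2 + c₆) * pdv v g₆ p) := by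
  have d₁ := EDT_diffAt h₁ a₁ b₁ c₁
  have d₂ := EDT_diffAt h₂ a₂ b₂ c₂
  have d₃ := EDT_diffAt h₃ a₃ b₃ c₃
  have d₄ := EDT_diffAt h₄ a₄ b₄ c₄
  have d₅ := EDT_diffAt h₅ a₅ b₅ c₅
  have d₆ := EDT_diffAt h₆ a₆ b₆ c₆
  have D2 : DifferentiableAt ℝ (EDT a₁ b₁ c₁ g₁ + EDT a₂ b₂ c₂ g₂) p := d₁.add d₂
  have D3 : DifferentiableAt ℝ (EDT a₁ b₁ c₁ g₁ + EDT a₂ b₂ c₂ g₂ + EDT a₃ b₃ c₃ g₃) p :=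
    D2.add d₃
  have D4 : DifferentiableAt ℝ (EDT a₁ b₁ c₁ g₁ + EDT a₂ b₂ c₂ g₂ + EDT a₃ b₃ c₃ g₃
      + EDT a₄ b₄ c₄ g₄) p := D3.add d₄
  have D5 : DifferentiableAt ℝ (EDT a₁ b₁ c₁ g₁ + EDT a₂ b₂ c₂ g₂ + EDT a₃ b₃ c₃ g₃
      + EDT a₄ b₄ c₄ g₄ + EDT a₅ b₅ c₅ g₅) p := D4.add d₅
  rw [pdv_add_fun D5 d₆ v,
    pdv_add_fun D4 d₅ v,
    pdv_add_fun D3 d₄ v,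
    pdv_add_fun D2 d₃ v,
    pdv_add_fun d₁ d₂ v,
    pdv_EDT v h₁, pdv_EDT v h₂, pdv_EDT v h₃, pdv_EDT v h₄, pdv_EDT v h₅, pdv_EDT v h₆]

private noncomputable def wfun (u : ℝ × ℝ → ℝ) : ℝ × ℝ → ℝ :=
  EDT 0 0 1 (pdv (1,0) (u)) + EDT 0 0 3 (pdv (0,1) (u)) + EDT 0 2 0 (pdv (1,0) (pdv (1,0) (u))) + EDT 2 (-2) 0 (pdv (1,0) (pdv (0,1) (u))) + EDT 2 4 0 (pdv (0,1) (pdv (0,1) (u))) + EDT 0 0 0 (pdv (1,0) (u))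

private noncomputable def Afun (u : ℝ × ℝ → ℝ) : ℝ × ℝ → ℝ :=
  EDT 0 0 1 (pdv (1,0) (pdv (1,0) (u))) + EDT 0 0 5 (pdv (1,0) (pdv (0,1) (u))) + EDT 0 0 2 (pdv (0,1) (pdv (0,1) (u))) + EDT 0 2 0 (pdv (1,0) (pdv (1,0) (pdv (1,0) (u)))) + EDT 2 (-2) 0 (pdv (1,0) (pdv (1,0) (pdv (0,1) (u)))) + EDT 2 4 0 (pdv (1,0) (pdv (0,1) (pdv (0,1) (u))))

private noncomputable def Bfun (u : ℝ × ℝ → ℝ) : ℝ × ℝ → ℝ :=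
  EDT 0 0 2 (pdv (1,0) (pdv (1,0) (u))) + EDT 0 0 (-1) (pdv (1,0) (pdv (0,1) (u))) + EDT 0 0 7 (pdv (0,1) (pdv (0,1) (u))) + EDT 0 2 0 (pdv (1,0) (pdv (1,0) (pdv (0,1) (u)))) + EDT 2 (-2) 0 (pdv (1,0) (pdv (0,1) (pdv (0,1) (u)))) + EDT 2 4 0 (pdv (0,1) (pdv (0,1) (pdv (0,1) (u))))

private noncomputable def Efun (u : ℝ × ℝ → ℝ) : ℝ × ℝ → ℝ :=
  EDT 1 1 0 (pdv (1,0) (pdv (1,0) (u))) + EDT 1 1 0 (pdv (0,1) (pdv (0,1) (u))) + EDT 0 0 1 (pdv (1,0) (u)) + EDT 0 0 1 (pdv (0,1) (u)) + EDT 0 0 0 (pdv (1,0) (u)) + EDT 0 0 0 (pdv (1,0) (u))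

private noncomputable def Exfun (u : ℝ × ℝ → ℝ) : ℝ × ℝ → ℝ :=
  EDT 0 0 2 (pdv (1,0) (pdv (1,0) (u))) + EDT 0 0 1 (pdv (0,1) (pdv (0,1) (u))) + EDT 1 1 0 (pdv (1,0) (pdv (1,0) (pdv (1,0) (u)))) + EDT 1 1 0 (pdv (1,0) (pdv (0,1) (pdv (0,1) (u)))) + EDT 0 0 1 (pdv (1,0) (pdv (0,1) (u))) + EDT 0 0 0 (pdv (1,0) (u))

private noncomputable def Eyfun (u : ℝ × ℝ → ℝ) : ℝ × ℝ → ℝ :=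
  EDT 0 0 1 (pdv (1,0) (pdv (1,0) (u))) + EDT 0 0 2 (pdv (0,1) (pdv (0,1) (u))) + EDT 1 1 0 (pdv (1,0) (pdv (1,0) (pdv (0,1) (u)))) + EDT 1 1 0 (pdv (0,1) (pdv (0,1) (pdv (0,1) (u)))) + EDT 0 0 1 (pdv (1,0) (pdv (0,1) (u))) + EDT 0 0 0 (pdv (1,0) (u))

/-- The symmetry `X₂`: if `u` solves the elliptic Euler–Darboux equation, so does
`v = (−y·u_x + 3x·u_y − 2y²·u_xy + 2x²·u_xy + 2x²·u_yy + 4xy·u_yy + 2y²·u_yy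
      + x·u_x + y·u_y)/(x+y)`. -/
theorem ED_symmetry_X2 (U : Set (ℝ × ℝ)) (hU : IsOpen U)
    (hne : ∀ p ∈ U, p.1 + p.2 ≠ 0) (u : ℝ × ℝ → ℝ) (hu : IsEDSolution U u) :
    IsEDSolution U (fun p =>
      (-p.2 * px u p + 3 * p.1 * py u p - 2 * p.2 ^ 2 * py (px u) p
        + 2 * p.1 ^ 2 * py (px u) p + 2 * p.1 ^ 2 * py (py u) p
        + 4 * p.1 * p.2 * py (py u) p + 2 * p.2 ^ 2 * py (py u) p
        + p.1 * px u p + p.2 * py u p) / (p.1 + p.2)) := by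
  obtain ⟨hC, hpde⟩ := hu
  simp only [px, py] at hpde
  -- smoothness of the derivative towers
  have s10 : ContDiffOn ℝ (⊤ : ℕ∞) (pdv (1,0) u) U := contDiffOn_pdv hU hC _
  have s01 : ContDiffOn ℝ (⊤ : ℕ∞) (pdv (0,1) u) U := contDiffOn_pdv hU hC _
  have s20 := contDiffOn_pdv hU s10 (1,0)
  have s11 := contDiffOn_pdv hU s01 (1,0)
  have s02 := contDiffOn_pdv hU s01 (0,1)
  have s30 := contDiffOn_pdv hU s20 (1,0)
  have s21 := contDiffOn_pdv hU s11 (1,0)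
  have s12 := contDiffOn_pdv hU s02 (1,0)
  have s03 := contDiffOn_pdv hU s02 (0,1)
  have dAt : ∀ {f : ℝ × ℝ → ℝ}, ContDiffOn ℝ (⊤ : ℕ∞) f U → ∀ {q : ℝ × ℝ}, q ∈ U →
      DifferentiableAt ℝ f q :=
    fun {f} hf {q} hq => (hf.contDiffAt (hU.mem_nhds hq)).differentiableAt (by simp)
  have cAt : ∀ {f : ℝ × ℝ → ℝ}, ContDiffOn ℝ (⊤ : ℕ∞) f U → ∀ {q : ℝ × ℝ}, q ∈ U →
      ContDiffAt ℝ (⊤ : ℕ∞) f q :=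
    fun {f} hf {q} hq => hf.contDiffAt (hU.mem_nhds hq)
  -- Clairaut commutation identities on U
  have c1 : ∀ q ∈ U, pdv (0,1) (pdv (1,0) u) q = pdv (1,0) (pdv (0,1) u) q :=
    fun q hq => pdv_comm (cAt hC hq) _ _
  have c2 : ∀ q ∈ U, pdv (0,1) (pdv (1,0) (pdv (1,0) u)) q
      = pdv (1,0) (pdv (1,0) (pdv (0,1) u)) q :=
    fun q hq => (pdv_comm (cAt s10 hq) _ _).trans (pdv_congr_on hU hq c1 _)
  have c3 : ∀ q ∈ U, pdv (0,1) (pdv (1,0) (pdv (0,1) u)) q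
      = pdv (1,0) (pdv (0,1) (pdv (0,1) u)) q :=
    fun q hq => pdv_comm (cAt s01 hq) _ _
  have c4 : ∀ q ∈ U, pdv (0,1) (pdv (1,0) (pdv (1,0) (pdv (1,0) u))) q
      = pdv (1,0) (pdv (1,0) (pdv (1,0) (pdv (0,1) u)))  q :=
    fun q hq => (pdv_comm (cAt s20 hq) _ _).trans (pdv_congr_on hU hq c2 _)
  have c5 : ∀ q ∈ U, pdv (0,1) (pdv (1,0) (pdv (1,0) (pdv (0,1) u))) q
      = pdv (1,0) (pdv (1,0) (pdv (0,1) (pdv (0,1) u))) q :=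
    fun q hq => (pdv_comm (cAt s11 hq) _ _).trans (pdv_congr_on hU hq c3 _)
  have c6 : ∀ q ∈ U, pdv (0,1) (pdv (1,0) (pdv (0,1) (pdv (0,1) u))) q
      = pdv (1,0) (pdv (0,1) (pdv (0,1) (pdv (0,1) u))) q :=
    fun q hq => pdv_comm (cAt s02 hq) _ _
  -- the equation function vanishes on U
  have hE0 : ∀ q ∈ U, Efun u q = 0 := by
    intro q hq
    simp only [Efun, EDT, Pi.add_apply]
    linear_combination hpde q hq
  -- its first derivatives vanish on U
  have hEx0 : ∀ q ∈ U, Exfun u q = 0 := by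
    intro q hq
    have h0 : pdv (1,0) (Efun u) q = 0 := pdv_zero_on hU hq hE0 _
    simp only [Efun] at h0
    rw [pdv_T6 (1,0) (dAt s20 hq) (dAt s02 hq) (dAt s10 hq) (dAt s01 hq) (dAt s10 hq)
      (dAt s10 hq)] at h0
    simp only [Exfun, EDT, Pi.add_apply]
    norm_num at h0 ⊢
    linear_combination h0
  have hEy0 : ∀ q ∈ U, Eyfun u q = 0 := by
    intro q hq
    have h0 : pdv (0,1) (Efun u) q = 0 := pdv_zero_on hU hq hE0 _
    simp only [Efun] at h0
    rw [pdv_T6 (0,1) (dAt s20 hq) (dAt s02 hq) (dAt s10 hq) (dAt s01 hq) (dAt s10 hq)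
      (dAt s10 hq)] at h0
    rw [c1 q hq, c2 q hq] at h0
    simp only [Eyfun, EDT, Pi.add_apply]
    norm_num at h0 ⊢
    linear_combination h0
  -- v agrees with w on U
  have hvw : ∀ q ∈ U, (fun p : ℝ × ℝ =>
      (-p.2 * pdv (1, 0) u p + 3 * p.1 * pdv (0, 1) u p
        - 2 * p.2 ^ 2 * pdv (0, 1) (pdv (1, 0) u) p
        + 2 * p.1 ^ 2 * pdv (0, 1) (pdv (1, 0) u) p
        + 2 * p.1 ^ 2 * pdv (0, 1) (pdv (0, 1) u) p
        + 4 * p.1 * p.2 * pdv (0, 1) (pdv (0, 1) u) p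
        + 2 * p.2 ^ 2 * pdv (0, 1) (pdv (0, 1) u) p
        + p.1 * pdv (1, 0) u p + p.2 * pdv (0, 1) u p) / (p.1 + p.2)) q = wfun u q := by
    intro q hq
    simp only [wfun, EDT, Pi.add_apply]
    rw [div_eq_iff (hne q hq), c1 q hq]
    linear_combination (-2 * q.2) * hpde q hq
  -- first derivatives of w on U
  have hA : ∀ q ∈ U, pdv (1,0) (wfun u) q = Afun u q := by
    intro q hq
    simp only [wfun]
    rw [pdv_T6 (1,0) (dAt s10 hq) (dAt s01 hq) (dAt s20 hq) (dAt s11 hq) (dAt s02 hq)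
      (dAt s10 hq)]
    simp only [Afun, EDT, Pi.add_apply]
    norm_num
    ring
  have hB : ∀ q ∈ U, pdv (0,1) (wfun u) q = Bfun u q := by
    intro q hq
    simp only [wfun]
    rw [pdv_T6 (0,1) (dAt s10 hq) (dAt s01 hq) (dAt s20 hq) (dAt s11 hq) (dAt s02 hq)
      (dAt s10 hq)]
    rw [c1 q hq, c2 q hq, c3 q hq]
    simp only [Bfun, EDT, Pi.add_apply]
    norm_num
    ring
  constructor
  · -- smoothness of v on U
    have wsm : ContDiffOn ℝ (⊤ : ℕ∞) (wfun u) U :=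
      (((((EDT_contDiffOn s10 0 0 1).add (EDT_contDiffOn s01 0 0 3)).add
        (EDT_contDiffOn s20 0 2 0)).add (EDT_contDiffOn s11 2 (-2) 0)).add
        (EDT_contDiffOn s02 2 4 0)).add (EDT_contDiffOn s10 0 0 0)
    exact wsm.congr hvw
  · -- the equation for v on U
    intro p hp
    simp only [px, py]
    have e1 : pdv (1,0) (fun p : ℝ × ℝ =>
        (-p.2 * pdv (1, 0) u p + 3 * p.1 * pdv (0, 1) u p
          - 2 * p.2 ^ 2 * pdv (0, 1) (pdv (1, 0) u) p
          + 2 * p.1 ^ 2 * pdv (0, 1) (pdv (1, 0) u) p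
          + 2 * p.1 ^ 2 * pdv (0, 1) (pdv (0, 1) u) p
          + 4 * p.1 * p.2 * pdv (0, 1) (pdv (0, 1) u) p
          + 2 * p.2 ^ 2 * pdv (0, 1) (pdv (0, 1) u) p
          + p.1 * pdv (1, 0) u p + p.2 * pdv (0, 1) u p) / (p.1 + p.2)) p = Afun u p :=
      (pdv_congr_on hU hp hvw _).trans (hA p hp)
    have e2 : pdv (0,1) (fun p : ℝ × ℝ =>
        (-p.2 * pdv (1, 0) u p + 3 * p.1 * pdv (0, 1) u p
          - 2 * p.2 ^ 2 * pdv (0, 1) (pdv (1, 0) u) p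
          + 2 * p.1 ^ 2 * pdv (0, 1) (pdv (1, 0) u) p
          + 2 * p.1 ^ 2 * pdv (0, 1) (pdv (0, 1) u) p
          + 4 * p.1 * p.2 * pdv (0, 1) (pdv (0, 1) u) p
          + 2 * p.2 ^ 2 * pdv (0, 1) (pdv (0, 1) u) p
          + p.1 * pdv (1, 0) u p + p.2 * pdv (0, 1) u p) / (p.1 + p.2)) p = Bfun u p :=
      (pdv_congr_on hU hp hvw _).trans (hB p hp)
    have e3 : pdv (1,0) (pdv (1,0) (fun p : ℝ × ℝ =>
        (-p.2 * pdv (1, 0) u p + 3 * p.1 * pdv (0, 1) u p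
          - 2 * p.2 ^ 2 * pdv (0, 1) (pdv (1, 0) u) p
          + 2 * p.1 ^ 2 * pdv (0, 1) (pdv (1, 0) u) p
          + 2 * p.1 ^ 2 * pdv (0, 1) (pdv (0, 1) u) p
          + 4 * p.1 * p.2 * pdv (0, 1) (pdv (0, 1) u) p
          + 2 * p.2 ^ 2 * pdv (0, 1) (pdv (0, 1) u) p
          + p.1 * pdv (1, 0) u p + p.2 * pdv (0, 1) u p) / (p.1 + p.2))) p
        = pdv (1,0) (Afun u) p :=
      pdv_congr_on hU hp (fun q hq => (pdv_congr_on hU hq hvw _).trans (hA q hq)) _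
    have e4 : pdv (0,1) (pdv (0,1) (fun p : ℝ × ℝ =>
        (-p.2 * pdv (1, 0) u p + 3 * p.1 * pdv (0, 1) u p
          - 2 * p.2 ^ 2 * pdv (0, 1) (pdv (1, 0) u) p
          + 2 * p.1 ^ 2 * pdv (0, 1) (pdv (1, 0) u) p
          + 2 * p.1 ^ 2 * pdv (0, 1) (pdv (0, 1) u) p
          + 4 * p.1 * p.2 * pdv (0, 1) (pdv (0, 1) u) p
          + 2 * p.2 ^ 2 * pdv (0, 1) (pdv (0, 1) u) p
          + p.1 * pdv (1, 0) u p + p.2 * pdv (0, 1) u p) / (p.1 + p.2))) p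
        = pdv (0,1) (Bfun u) p :=
      pdv_congr_on hU hp (fun q hq => (pdv_congr_on hU hq hvw _).trans (hB q hq)) _
    -- expand second derivatives
    simp only [Afun] at e3
    rw [pdv_T6 (1,0) (dAt s20 hp) (dAt s11 hp) (dAt s02 hp) (dAt s30 hp) (dAt s21 hp)
      (dAt s12 hp)] at e3
    simp only [Bfun] at e4
    rw [pdv_T6 (0,1) (dAt s20 hp) (dAt s11 hp) (dAt s02 hp) (dAt s21 hp) (dAt s12 hp)
      (dAt s03 hp)] at e4
    rw [c2 p hp, c3 p hp, c5 p hp, c6 p hp] at e4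
    -- expanded vanishing identities
    have hIx := hEx0 p hp
    have hIy := hEy0 p hp
    simp only [Exfun, EDT, Pi.add_apply] at hIx
    simp only [Eyfun, EDT, Pi.add_apply] at hIy
    have hIxx : pdv (1,0) (Exfun u) p = 0 := pdv_zero_on hU hp hEx0 _
    simp only [Exfun] at hIxx
    rw [pdv_T6 (1,0) (dAt s20 hp) (dAt s02 hp) (dAt s30 hp) (dAt s12 hp) (dAt s11 hp)
      (dAt s10 hp)] at hIxx
    have hIxy : pdv (0,1) (Exfun u) p = 0 := pdv_zero_on hU hp hEx0 _
    simp only [Exfun] at hIxy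
    rw [pdv_T6 (0,1) (dAt s20 hp) (dAt s02 hp) (dAt s30 hp) (dAt s12 hp) (dAt s11 hp)
      (dAt s10 hp)] at hIxy
    rw [c1 p hp, c2 p hp, c3 p hp, c4 p hp, c6 p hp] at hIxy
    have hIyy : pdv (0,1) (Eyfun u) p = 0 := pdv_zero_on hU hp hEy0 _
    simp only [Eyfun] at hIyy
    rw [pdv_T6 (0,1) (dAt s20 hp) (dAt s02 hp) (dAt s21 hp) (dAt s03 hp) (dAt s11 hp)
      (dAt s10 hp)] at hIyy
    rw [c1 p hp, c2 p hp, c3 p hp, c5 p hp] at hIyy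
    simp only [Afun, Bfun, EDT, Pi.add_apply] at e1 e2 e3 e4
    norm_num at e1 e2 e3 e4 hIxx hIxy hIyy ⊢
    linear_combination (p.1 + p.2) * e3 + (p.1 + p.2) * e4 + e1 + e2 - hIx + 5 * hIy
      + 2 * p.2 * hIxx + (2 * p.1 - 2 * p.2) * hIxy + (2 * p.1 + 4 * p.2) * hIyy
end
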